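/- Fix complex numbers a, b and fix γ ∈ (0, π/2). Define, for ε in the sector S⁺ = {ε : 0 < |ε| < r, arg(ε) ∈ (-π+γ, π-γ)}, λ⁺(ε) = (-2πi·e^{πi(1-a-b)} / (Γ(a)Γ(b))) · ε^{a+b-1} · Γ(a + b + 1/ε) / Γ(1 + 1/ε). Then lim_{ε→0, ε∈S⁺} λ⁺(ε) = -2πi·e^{πi(1-a-b)} / (Γ(a)Γ(b)). -/

import Mathlib

open Complex Real Filter Finset Topology Bornology

/-!
By Euler's limit formula, `z ^ (1 - s) Γ(z + s) / Γ(z + 1)` is the limit of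
`z ^ (1 - s) n ^ (s - 1) ∏_{j ≤ n} (1 + (s - 1) / (z + 1 + j))⁻¹`. Off the negative real axis the
logarithms `log (1 + 1 / (z + j))` telescope to `log (z + n + 1) - log z`, and this turns the
ratio into `exp Λ(z)` with
`Λ(z) = (s - 1) log (1 + 1/z) + ∑ⱼ ((s - 1) log (1 + 1/(z+1+j)) - log (1 + (s - 1)/(z+1+j)))`.
Each summand is `O(|z + 1 + j|⁻²)`, and in a sector `|arg z| ≤ π - γ` one has `|z + t| ≳ |z| + t`
for `t ≥ 0`; hence `Λ(z) = O(1/|z|)` and the ratio tends to `1` as `z → ∞` in the sector.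
Since `λ⁺(ε) = λ · z ^ (1 - (a + b)) Γ(z + a + b) / Γ(z + 1)` with `z = 1/ε`, the theorem follows.
-/

namespace Complex

lemma add_natCast_mem_slitPlane {z : ℂ} (hz : z ∈ slitPlane) (n : ℕ) : z + n ∈ slitPlane := by
  rw [mem_slitPlane_iff] at hz ⊢
  simp only [add_re, natCast_re, add_im, natCast_im, add_zero]
  exact hz.imp (fun h ↦ by positivity) id

lemma add_one_add_natCast_ne_zero {z : ℂ} (hz : z ∈ slitPlane) (j : ℕ) : z + 1 + j ≠ 0 :=
  slitPlane_ne_zero (by simpa [add_assoc] using add_natCast_mem_slitPlane hz (1 + j))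

lemma log_add_one {w : ℂ} (hw : w ∈ slitPlane) : log (w + 1) = log w + log (1 + w⁻¹) := by
  have hw₀ := slitPlane_ne_zero hw
  have hinv_im : (1 + w⁻¹).im = -w.im / normSq w := by simp [neg_div]
  have hnormSq : 0 < normSq w := normSq_pos.2 hw₀
  rw [← (log_mul_eq_add_log_iff hw₀ ?_).2, mul_add, mul_one, mul_inv_cancel₀ hw₀]
  · rcases lt_trichotomy w.im 0 with him | him | him
    · have h₁ : 0 ≤ (1 + w⁻¹).im := by rw [hinv_im]; exact div_nonneg (by linarith) hnormSq.le
      constructor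
      · linarith [neg_pi_lt_arg w, arg_nonneg_iff.2 h₁]
      · linarith [arg_neg_iff.2 him, arg_le_pi (1 + w⁻¹)]
    · have hre : 0 < w.re := (mem_slitPlane_iff.1 hw).resolve_right (not_not.2 him)
      have h₁ : 0 ≤ (1 + w⁻¹).re := by
        have : 0 ≤ w⁻¹.re := by rw [inv_re]; exact div_nonneg hre.le hnormSq.le
        simp only [add_re, one_re]; linarith
      rw [arg_eq_zero_iff.2 ⟨hre.le, him⟩,
        arg_eq_zero_iff.2 ⟨h₁, by rw [hinv_im, him, neg_zero, zero_div]⟩]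
      constructor <;> linarith [pi_pos]
    · have h₁ : (1 + w⁻¹).im < 0 := by
        rw [hinv_im]; exact div_neg_of_neg_of_pos (by linarith) hnormSq
      constructor
      · linarith [neg_pi_lt_arg (1 + w⁻¹), arg_nonneg_iff.2 him.le]
      · linarith [arg_neg_iff.2 h₁, arg_le_pi w]
  · intro h
    have : w⁻¹ = -1 := by linear_combination h
    rw [inv_eq_iff_eq_inv, inv_neg, inv_one] at this
    exact (mem_slitPlane_iff_arg.1 hw).1 (by rw [this, arg_neg_one])

lemma sum_range_log_one_add_inv {z : ℂ} (hz : z ∈ slitPlane) (m : ℕ) :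
    ∑ j ∈ range m, log (1 + (z + j)⁻¹) = log (z + m) - log z := by
  induction m with
  | zero => simp
  | succ m ih =>
    rw [sum_range_succ, ih, Nat.cast_succ, ← add_assoc,
      log_add_one (add_natCast_mem_slitPlane hz m)]
    ring

lemma norm_log_one_add_sub_self_le_sq {x : ℂ} (hx : ‖x‖ ≤ 1 / 2) :
    ‖log (1 + x) - x‖ ≤ ‖x‖ ^ 2 := by
  have hinv : (1 - ‖x‖)⁻¹ ≤ 2 := by
    rw [inv_le_comm₀ (by linarith) two_pos]; linarith
  calc ‖log (1 + x) - x‖ ≤ ‖x‖ ^ 2 * (1 - ‖x‖)⁻¹ / 2 :=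
        norm_log_one_add_sub_self_le (by linarith)
    _ ≤ ‖x‖ ^ 2 * 2 / 2 := by gcongr
    _ = ‖x‖ ^ 2 := by ring

lemma norm_mul_log_one_add_sub_log_one_add_mul_le {a u : ℂ} (hu : ‖u‖ ≤ 1 / 2)
    (hau : ‖a * u‖ ≤ 1 / 2) :
    ‖a * log (1 + u) - log (1 + a * u)‖ ≤ (‖a‖ + ‖a‖ ^ 2) * ‖u‖ ^ 2 := by
  calc ‖a * log (1 + u) - log (1 + a * u)‖
      = ‖a * (log (1 + u) - u) - (log (1 + a * u) - a * u)‖ := by ring_nf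
    _ ≤ ‖a‖ * ‖log (1 + u) - u‖ + ‖log (1 + a * u) - a * u‖ := by
        grw [norm_sub_le, norm_mul]
    _ ≤ ‖a‖ * ‖u‖ ^ 2 + ‖a * u‖ ^ 2 := by
        gcongr
        exacts [norm_log_one_add_sub_self_le_sq hu, norm_log_one_add_sub_self_le_sq hau]
    _ = (‖a‖ + ‖a‖ ^ 2) * ‖u‖ ^ 2 := by rw [norm_mul]; ring

lemma neg_cos_mul_norm_le_re {z : ℂ} {γ : ℝ} (hγ : 0 ≤ γ) (hz : |z.arg| ≤ π - γ) :
    -Real.cos γ * ‖z‖ ≤ z.re := by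
  have hcos : Real.cos (π - γ) ≤ Real.cos z.arg := by
    rw [← Real.cos_abs z.arg]
    exact Real.cos_le_cos_of_nonneg_of_le_pi (abs_nonneg _) (by linarith) hz
  rw [Real.cos_pi_sub] at hcos
  rw [← norm_mul_cos_arg z]
  nlinarith [norm_nonneg z]

lemma one_sub_cos_div_two_mul_sq_le_sq_norm_add {z : ℂ} {γ : ℝ} (hγ : 0 ≤ γ)
    (hz : |z.arg| ≤ π - γ) {t : ℝ} (ht : 0 ≤ t) :
    (1 - Real.cos γ) / 2 * (‖z‖ + t) ^ 2 ≤ ‖z + t‖ ^ 2 := by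
  have hre := neg_cos_mul_norm_le_re hγ hz
  have hsq : ‖z + t‖ ^ 2 = ‖z‖ ^ 2 + 2 * t * z.re + t ^ 2 := by
    rw [Complex.sq_norm, Complex.sq_norm, normSq_apply, normSq_apply]
    simp only [add_re, ofReal_re, add_im, ofReal_im, add_zero]
    ring
  rw [hsq]
  nlinarith [Real.neg_one_le_cos γ, sq_nonneg (‖z‖ - t), mul_nonneg ht (norm_nonneg z)]

lemma GammaSeq_add_div_GammaSeq_add_one {z : ℂ} (s : ℂ) (hz : ∀ j : ℕ, z + 1 + j ≠ 0)
    {n : ℕ} (hn : n ≠ 0) :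
    GammaSeq (z + s) n / GammaSeq (z + 1) n =
      (n : ℂ) ^ (s - 1) * ∏ j ∈ range (n + 1), (1 + (s - 1) * (z + 1 + j)⁻¹)⁻¹ := by
  have hn' : (n : ℂ) ≠ 0 := Nat.cast_ne_zero.2 hn
  have hterm (j : ℕ) : (1 + (s - 1) * (z + 1 + j)⁻¹)⁻¹ = (z + 1 + j) / (z + s + j) := by
    rw [← inv_div]; congr 1; field_simp [hz j]; ring
  have hprod : ∏ j ∈ range (n + 1), (z + 1 + (j : ℂ)) ≠ 0 := prod_ne_zero_iff.2 fun j _ ↦ hz j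
  have hpow : (n : ℂ) ^ (z + s) = (n : ℂ) ^ (z + 1) * (n : ℂ) ^ (s - 1) := by
    rw [← cpow_add _ _ hn']; ring_nf
  simp_rw [GammaSeq, hterm, prod_div_distrib, hpow]
  have hpow_ne : (n : ℂ) ^ (z + 1) ≠ 0 := by simp [cpow_eq_zero_iff, hn']
  have hfact : (n.factorial : ℂ) ≠ 0 := Nat.cast_ne_zero.2 n.factorial_ne_zero
  field_simp

/-- This is `O(‖w‖⁻²)`; its first part telescopes when summed over `w = z + 1 + j`. -/
noncomputable def logGammaRatioTerm (s w : ℂ) : ℂ :=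
  (s - 1) * log (1 + w⁻¹) - log (1 + (s - 1) * w⁻¹)

/-- A logarithm of `z ^ (1 - s) * Γ(z + s) / Γ(z + 1)`, see
`cpow_mul_Gamma_add_div_Gamma_add_one_eq_exp`. -/
noncomputable def logGammaRatio (s z : ℂ) : ℂ :=
  (s - 1) * log (1 + z⁻¹) + ∑' j : ℕ, logGammaRatioTerm s (z + 1 + j)

/-- The telescoped logarithms produce `(z + n + 2) ^ (s - 1)` instead of the `n ^ (s - 1)` of
`GammaSeq`; the last factor is their ratio, which tends to `1`. -/
lemma exp_add_sum_logGammaRatioTerm {s z : ℂ} (hz : z ∈ slitPlane)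
    (hs : ∀ j : ℕ, 1 + (s - 1) * (z + 1 + j)⁻¹ ≠ 0) {n : ℕ} (hn : n ≠ 0) :
    exp ((s - 1) * log (1 + z⁻¹) + ∑ j ∈ range (n + 1), logGammaRatioTerm s (z + 1 + j)) =
      z ^ (1 - s) * (GammaSeq (z + s) n / GammaSeq (z + 1) n) *
        exp ((s - 1) * log (1 + (z + 2) / n)) := by
  have hn' : (n : ℂ) ≠ 0 := Nat.cast_ne_zero.2 hn
  have htel : log (1 + z⁻¹) + ∑ j ∈ range (n + 1), log (1 + (z + 1 + j)⁻¹) =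
      log n + log (1 + (z + 2) / n) - log z := by
    have hsplit : (n : ℂ) * (1 + (z + 2) / n) = z + ↑(n + 2) := by
      field_simp; push_cast; ring
    have hlog := log_ofReal_mul (r := n) (by positivity) (x := 1 + (z + 2) / n)
      (by rw [← mul_ne_zero_iff_left hn', hsplit]
          exact slitPlane_ne_zero (add_natCast_mem_slitPlane hz _))
    rw [ofReal_natCast, hsplit, natCast_log] at hlog
    rw [← hlog, ← sum_range_log_one_add_inv hz (n + 2), sum_range_succ' _ (n + 1)]
    push_cast
    simp only [add_zero, add_assoc, add_comm (1 : ℂ)]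
    ring
  rw [GammaSeq_add_div_GammaSeq_add_one s (add_one_add_natCast_ne_zero hz) hn,
    cpow_def_of_ne_zero (slitPlane_ne_zero hz), cpow_def_of_ne_zero hn', prod_inv_distrib]
  have hprod : ∏ j ∈ range (n + 1), (1 + (s - 1) * (z + 1 + j)⁻¹) =
      exp (∑ j ∈ range (n + 1), log (1 + (s - 1) * (z + 1 + j)⁻¹)) := by
    rw [exp_sum]; exact prod_congr rfl fun j _ ↦ (exp_log (hs j)).symm
  rw [hprod, ← exp_neg, ← exp_add, ← exp_add, ← exp_add]
  congr 1
  simp only [logGammaRatioTerm, sum_sub_distrib, ← mul_sum]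
  linear_combination (s - 1) * htel

lemma cpow_mul_Gamma_add_div_Gamma_add_one_eq_exp {s z : ℂ} (hz : z ∈ slitPlane)
    (hs : ∀ j : ℕ, 1 + (s - 1) * (z + 1 + j)⁻¹ ≠ 0)
    (hsum : Summable fun j : ℕ ↦ logGammaRatioTerm s (z + 1 + j)) :
    z ^ (1 - s) * Gamma (z + s) / Gamma (z + 1) = exp (logGammaRatio s z) := by
  have hΓ : Gamma (z + 1) ≠ 0 := Gamma_ne_zero fun m hm ↦
    add_one_add_natCast_ne_zero hz m (by rw [hm]; ring)
  have hcorr : Tendsto (fun n : ℕ ↦ exp ((s - 1) * log (1 + (z + 2) / n))) atTop (𝓝 1) := by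
    have hlog := (continuousAt_clog one_mem_slitPlane).tendsto.comp
      (by simpa using (tendsto_const_div_atTop_nhds_zero_nat (z + 2)).const_add 1)
    simpa [Function.comp_def] using (continuous_exp.tendsto _).comp (hlog.const_mul (s - 1))
  have hlhs := (((GammaSeq_tendsto_Gamma (z + s)).div (GammaSeq_tendsto_Gamma (z + 1)) hΓ).const_mul
    (z ^ (1 - s))).mul hcorr
  have hrhs := (continuous_exp.tendsto _).comp
    ((hsum.hasSum.tendsto_sum_nat.comp (tendsto_add_atTop_nat 1)).const_add
      ((s - 1) * log (1 + z⁻¹)))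
  rw [mul_one, ← mul_div_assoc] at hlhs
  refine tendsto_nhds_unique (hlhs.congr' ?_) hrhs
  filter_upwards [eventually_ne_atTop 0] with n hn
  exact (exp_add_sum_logGammaRatioTerm hz hs hn).symm

section Bounds

variable {a s w : ℂ} {x κ : ℝ}

lemma one_add_norm_mul_norm_inv_le_half (hκ : 0 < κ) (hw : κ * (x + 1) ^ 2 ≤ ‖w‖ ^ 2)
    (hx : 0 ≤ x) (hx_large : 4 * (1 + ‖a‖) ^ 2 ≤ κ * x ^ 2) :
    (1 + ‖a‖) * ‖w⁻¹‖ ≤ 1 / 2 := by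
  have hpos : 0 < κ * x ^ 2 := by nlinarith [norm_nonneg a]
  refine (pow_le_pow_iff_left₀ (by positivity) (by norm_num) two_ne_zero).1 ?_
  calc ((1 + ‖a‖) * ‖w⁻¹‖) ^ 2 = (1 + ‖a‖) ^ 2 * (‖w‖ ^ 2)⁻¹ := by rw [norm_inv]; ring
    _ ≤ (κ * x ^ 2 / 4) * (κ * (x + 1) ^ 2)⁻¹ := by gcongr; linarith
    _ ≤ (κ * x ^ 2 / 4) * (κ * x ^ 2)⁻¹ := by gcongr; linarith
    _ = (1 / 2) ^ 2 := by rw [div_mul_eq_mul_div, mul_inv_cancel₀ hpos.ne']; norm_num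

lemma norm_logGammaRatioTerm_le (hκ : 0 < κ) (hw : κ * (x + 1) ^ 2 ≤ ‖w‖ ^ 2) (hx : 0 < x)
    (hx_large : 4 * (1 + ‖s - 1‖) ^ 2 ≤ κ * x ^ 2) :
    ‖logGammaRatioTerm s w‖ ≤ (‖s - 1‖ + ‖s - 1‖ ^ 2) / κ * (x⁻¹ - (x + 1)⁻¹) := by
  set σ := ‖s - 1‖
  have hσ : 0 ≤ σ := norm_nonneg _
  have hsmall := one_add_norm_mul_norm_inv_le_half hκ hw hx.le hx_large
  calc ‖logGammaRatioTerm s w‖ ≤ (σ + σ ^ 2) * ‖w⁻¹‖ ^ 2 :=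
        norm_mul_log_one_add_sub_log_one_add_mul_le (by nlinarith [norm_nonneg w⁻¹])
          (by rw [norm_mul]; nlinarith [norm_nonneg w⁻¹])
    _ ≤ (σ + σ ^ 2) * (κ * (x + 1) ^ 2)⁻¹ := by
        rw [norm_inv, inv_pow]; gcongr
    _ ≤ (σ + σ ^ 2) / κ * (x⁻¹ - (x + 1)⁻¹) := by
        rw [inv_sub_inv hx.ne' (by positivity), add_sub_cancel_left, one_div, mul_inv,
          div_eq_mul_inv, mul_assoc]
        gcongr
        nlinarith

end Bounds

section SectorBounds

variable {s z : ℂ} {κ : ℝ} (hκ : 0 < κ) (hz : ∀ j : ℕ, κ * (‖z‖ + j + 1) ^ 2 ≤ ‖z + 1 + j‖ ^ 2)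
  (hz_large : 4 * (1 + ‖s - 1‖) ^ 2 ≤ κ * ‖z‖ ^ 2)
include hκ hz hz_large

lemma one_add_mul_inv_add_one_add_natCast_ne_zero (j : ℕ) : 1 + (s - 1) * (z + 1 + j)⁻¹ ≠ 0 := by
  have hsmall := one_add_norm_mul_norm_inv_le_half hκ (hz j) (by positivity)
    (hz_large.trans (by gcongr; simp))
  refine slitPlane_ne_zero (mem_slitPlane_of_norm_lt_one ?_)
  rw [norm_mul]
  nlinarith [norm_nonneg (z + 1 + j)⁻¹]

lemma sum_range_norm_logGammaRatioTerm_le (n : ℕ) :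
    ∑ j ∈ range n, ‖logGammaRatioTerm s (z + 1 + j)‖ ≤
      (‖s - 1‖ + ‖s - 1‖ ^ 2) / κ * ‖z‖⁻¹ := by
  have hz₀ : 0 < ‖z‖ := (norm_nonneg z).lt_of_ne' fun h ↦ by
    rw [h] at hz_large; nlinarith [norm_nonneg (s - 1)]
  calc ∑ j ∈ range n, ‖logGammaRatioTerm s (z + 1 + j)‖
      ≤ ∑ j ∈ range n, (‖s - 1‖ + ‖s - 1‖ ^ 2) / κ * ((‖z‖ + j)⁻¹ - (‖z‖ + (j + 1 : ℕ))⁻¹) := by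
        gcongr with j
        push_cast
        rw [← add_assoc]
        exact norm_logGammaRatioTerm_le hκ (hz j) (by positivity)
          (hz_large.trans (by gcongr; simp))
    _ = (‖s - 1‖ + ‖s - 1‖ ^ 2) / κ * (‖z‖⁻¹ - (‖z‖ + n)⁻¹) := by
        rw [← mul_sum, sum_range_sub' (fun j : ℕ ↦ (‖z‖ + j)⁻¹)]; simp
    _ ≤ (‖s - 1‖ + ‖s - 1‖ ^ 2) / κ * ‖z‖⁻¹ := by gcongr; simp; positivity

lemma summable_norm_logGammaRatioTerm :
    Summable fun j : ℕ ↦ ‖logGammaRatioTerm s (z + 1 + j)‖ :=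
  summable_of_sum_range_le (fun _ ↦ norm_nonneg _)
    (sum_range_norm_logGammaRatioTerm_le hκ hz hz_large)

lemma norm_logGammaRatio_le :
    ‖logGammaRatio s z‖ ≤ (3 / 2 * ‖s - 1‖ + (‖s - 1‖ + ‖s - 1‖ ^ 2) / κ) * ‖z‖⁻¹ := by
  have hκ_le_one : κ ≤ 1 := by
    have h₀ := hz 0
    simp only [CharP.cast_eq_zero, add_zero] at h₀
    have h₁ : ‖z + 1‖ ^ 2 ≤ (‖z‖ + 1) ^ 2 := by
      gcongr; exact (norm_add_le _ _).trans_eq (by rw [norm_one])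
    exact le_of_mul_le_mul_right (a := (‖z‖ + 1) ^ 2) (by linarith) (by positivity)
  have hinv : ‖z⁻¹‖ ≤ 1 / 2 := by
    have : 2 ≤ ‖z‖ := by nlinarith [norm_nonneg z, norm_nonneg (s - 1)]
    rw [norm_inv, inv_le_comm₀ (by positivity) (by norm_num)]
    linarith
  calc ‖logGammaRatio s z‖
      ≤ ‖s - 1‖ * ‖log (1 + z⁻¹)‖ + ∑' j : ℕ, ‖logGammaRatioTerm s (z + 1 + j)‖ := by
        grw [logGammaRatio, norm_add_le, norm_mul,
          norm_tsum_le_tsum_norm (summable_norm_logGammaRatioTerm hκ hz hz_large)]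
    _ ≤ ‖s - 1‖ * (3 / 2 * ‖z⁻¹‖) + (‖s - 1‖ + ‖s - 1‖ ^ 2) / κ * ‖z‖⁻¹ := by
        gcongr
        · exact norm_log_one_add_half_le_self hinv
        · exact tsum_le_of_sum_range_le (fun _ ↦ norm_nonneg _)
            (sum_range_norm_logGammaRatioTerm_le hκ hz hz_large)
    _ = _ := by rw [norm_inv]; ring

end SectorBounds

theorem tendsto_cpow_mul_Gamma_add_div_Gamma_add_one (s : ℂ) {γ : ℝ} (hγ₀ : 0 < γ)
    (hγπ : γ ≤ π) :
    Tendsto (fun z ↦ z ^ (1 - s) * Gamma (z + s) / Gamma (z + 1))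
      (cobounded ℂ ⊓ 𝓟 {z | |z.arg| ≤ π - γ}) (𝓝 1) := by
  set κ := (1 - Real.cos γ) / 2
  have hκ : 0 < κ := by
    have := Real.cos_lt_cos_of_nonneg_of_le_pi le_rfl hγπ hγ₀
    rw [Real.cos_zero] at this
    simp only [κ]; linarith
  have hlarge : ∀ᶠ z in cobounded ℂ, 4 * (1 + ‖s - 1‖) ^ 2 ≤ κ * ‖z‖ ^ 2 :=
    (((tendsto_pow_atTop two_ne_zero).comp tendsto_norm_cobounded_atTop).const_mul_atTop
      hκ).eventually_ge_atTop _
  have hgood : ∀ᶠ z in cobounded ℂ ⊓ 𝓟 {z | |z.arg| ≤ π - γ}, z ∈ slitPlane ∧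
      (∀ j : ℕ, κ * (‖z‖ + j + 1) ^ 2 ≤ ‖z + 1 + j‖ ^ 2) ∧
      4 * (1 + ‖s - 1‖) ^ 2 ≤ κ * ‖z‖ ^ 2 := by
    filter_upwards [hlarge.filter_mono inf_le_left, mem_inf_of_right (mem_principal_self _)]
      with z hzR hzarg
    refine ⟨mem_slitPlane_iff_arg.2 ⟨?_, ?_⟩, fun j ↦ ?_, hzR⟩
    · intro h; rw [h, abs_of_pos pi_pos] at hzarg; linarith
    · rintro rfl; rw [norm_zero] at hzR; nlinarith [norm_nonneg (s - 1)]
    · have := one_sub_cos_div_two_mul_sq_le_sq_norm_add hγ₀.le hzarg (t := j + 1) (by positivity)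
      push_cast at this
      rwa [show z + ((j : ℂ) + 1) = z + 1 + j by ring, ← add_assoc] at this
  have hΛ : Tendsto (logGammaRatio s) (cobounded ℂ ⊓ 𝓟 {z | |z.arg| ≤ π - γ}) (𝓝 0) := by
    refine squeeze_zero_norm' (hgood.mono fun z ⟨_, hz, hR⟩ ↦ norm_logGammaRatio_le hκ hz hR) ?_
    simpa using (tendsto_norm_cobounded_atTop.inv_tendsto_atTop.const_mul
      (3 / 2 * ‖s - 1‖ + (‖s - 1‖ + ‖s - 1‖ ^ 2) / κ)).mono_left inf_le_left
  have hexp := (continuous_exp.tendsto 0).comp hΛ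
  rw [exp_zero] at hexp
  refine hexp.congr' (hgood.mono fun z ⟨hz, hzj, hR⟩ ↦ ?_)
  exact (cpow_mul_Gamma_add_div_Gamma_add_one_eq_exp hz
    (one_add_mul_inv_add_one_add_natCast_ne_zero hκ hzj hR)
    (summable_norm_logGammaRatioTerm hκ hzj hR).of_norm).symm

end Complex

/-- The unfolded Stokes coefficient
`λ⁺(ε) = (-2πi·e^{πi(1-a-b)}/(Γ(a)Γ(b)))·ε^{a+b-1}·Γ(a+b+1/ε)/Γ(1+1/ε)`
tends, as `ε → 0` in the sector `S⁺`, to the Stokes multiplier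
`λ = -2πi·e^{πi(1-a-b)}/(Γ(a)Γ(b))`. -/
theorem lambdaPlus_tendsto_lambda (a b : ℂ) (γ : ℝ) (hγ : γ ∈ Set.Ioo 0 (π / 2)) :
    ∃ r : ℝ, 0 < r ∧
      Tendsto
        (fun ε : ℂ =>
          (-2 * π * I * Complex.exp (π * I * (1 - a - b)) /
              (Complex.Gamma a * Complex.Gamma b)) *
            ε ^ (a + b - 1) * Complex.Gamma (a + b + 1 / ε) / Complex.Gamma (1 + 1 / ε))
        (nhdsWithin 0
          {ε : ℂ | 0 < ‖ε‖ ∧ ‖ε‖ < r ∧ ε.arg ∈ Set.Ioo (-π + γ) (π - γ)})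
        (nhds (-2 * π * I * Complex.exp (π * I * (1 - a - b)) /
          (Complex.Gamma a * Complex.Gamma b))) := by
  obtain ⟨hγ₀, hγπ⟩ := hγ
  refine ⟨1, one_pos, ?_⟩
  set S := {ε : ℂ | 0 < ‖ε‖ ∧ ‖ε‖ < 1 ∧ ε.arg ∈ Set.Ioo (-π + γ) (π - γ)}
  have harg {ε : ℂ} (hε : ε ∈ S) : ε.arg ≠ π := fun h ↦ by
    have := hε.2.2.2; linarith
  have hinv : Tendsto (·⁻¹) (𝓝[S] 0) (cobounded ℂ ⊓ 𝓟 {z | |z.arg| ≤ π - γ}) := by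
    refine tendsto_inf.2 ⟨tendsto_inv₀_nhdsNE_zero.mono_left
      (nhdsWithin_mono _ fun ε (hε : ε ∈ S) ↦ norm_pos_iff.1 hε.1), tendsto_principal.2 ?_⟩
    filter_upwards [self_mem_nhdsWithin] with ε hε
    rw [arg_inv, if_neg (harg hε), abs_neg, abs_le]
    exact ⟨by linarith [hε.2.2.1], by linarith [hε.2.2.2]⟩
  have hlim := ((Complex.tendsto_cpow_mul_Gamma_add_div_Gamma_add_one (a + b) hγ₀
    (by linarith [pi_pos])).comp hinv).const_mul
      (-2 * π * I * Complex.exp (π * I * (1 - a - b)) / (Complex.Gamma a * Complex.Gamma b))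
  rw [mul_one] at hlim
  refine hlim.congr' (eventually_nhdsWithin_of_forall fun ε hε ↦ ?_)
  simp only [Function.comp_apply, one_div]
  rw [inv_cpow _ _ (harg hε), ← cpow_neg, neg_sub, add_comm ε⁻¹, add_comm ε⁻¹]
  ring
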